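/- For every Schröder path γ of semilength n, the number of Schröder paths of semilength n that cover γ in the Schröder lattice S_n equals ω_H(γ) + ω_DU(γ), and the number of Schröder paths of semilength n covered by γ equals ω*_H(γ) + ω_UD(γ), where ω_H(γ) is the number of horizontal steps of γ, ω*_H(γ) is the number of horizontal steps of γ at height at least 1, ω_DU(γ) is the number of occurrences of a D step immediately followed by a U step, and ω_UD(γ) is the number of occurrences of a U step immediately followed by a D step. -/

import Mathlib

/-- Steps of a (Grand) Schröder path: up `U = (1,1)`, down `D = (1,-1)`
and double horizontal `H = (2,0)`. -/
inductive Step : Type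
  | U : Step
  | D : Step
  | H : Step
  deriving DecidableEq

/-- The height reached at the end of a path: number of up steps minus number of
down steps. -/
def height (w : List Step) : ℤ := (w.count Step.U : ℤ) - (w.count Step.D : ℤ)

/-- Expansion of a Schröder word into unit-width letters: each double horizontal step
`H = (2,0)` is replaced by two unit horizontal letters, so that position `x` in the
expanded word corresponds to abscissa `x` of the path. -/
def expand (w : List Step) : List Step :=
  w.flatMap fun s => match s with
    | Step.H => [Step.H, Step.H]
    | s => [s]

/-- The height of the path `w` at the integer abscissa `x`. -/
def heightAt (w : List Step) (x : ℕ) : ℤ := height ((expand w).take x)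

/-- A Schröder path of semilength `n`: a word over `{U, D, H}` with equally many `U`'s
and `D`'s, with (number of `U`'s) + (number of `H`'s) equal to `n`, all of whose
prefixes contain at least as many `U`'s as `D`'s. -/
def IsSchroder (n : ℕ) (w : List Step) : Prop :=
  w.count Step.U = w.count Step.D ∧ w.count Step.U + w.count Step.H = n ∧
    ∀ i : ℕ, 0 ≤ height (w.take i)

/-- A Grand Schröder path of semilength `n`: a word over `{U, D, H}` with equally many
`U`'s and `D`'s, with (number of `U`'s) + (number of `H`'s) equal to `n`. -/
def IsGrandSchroder (n : ℕ) (w : List Step) : Prop :=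
  w.count Step.U = w.count Step.D ∧ w.count Step.U + w.count Step.H = n

/-- The order on (Grand) Schröder paths: pointwise comparison of heights at every
integer abscissa. -/
def PathLe (w w' : List Step) : Prop :=
  ∀ x : ℕ, heightAt w x ≤ heightAt w' x

/-- Strict order on paths. -/
def PathLt (w w' : List Step) : Prop := PathLe w w' ∧ ¬ PathLe w' w

/-- `Covers P w w'` : within the class of paths satisfying `P`, the path `w'` covers `w`,
i.e. `w < w'` and no path of the class lies strictly between them. -/
def Covers (P : List Step → Prop) (w w' : List Step) : Prop :=
  P w ∧ P w' ∧ PathLt w w' ∧ ∀ z : List Step, P z → ¬ (PathLt w z ∧ PathLt z w')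

/-- Number of occurrences in `w` of an `x` step immediately followed by a `y` step. -/
def countFactor (x y : Step) (w : List Step) : ℕ :=
  ((Finset.range w.length).filter
    (fun i => w[i]? = some x ∧ w[i + 1]? = some y)).card

/-- Number of horizontal steps of `w` at height at least `1` (the height of a step being
the height of the path at its starting abscissa). -/
def countHighH (w : List Step) : ℕ :=
  ((Finset.range w.length).filter
    (fun i => w[i]? = some Step.H ∧ 1 ≤ height (w.take i))).card

/-- The number of edges of the Hasse diagram of the Schröder lattice `S_n`,
i.e. the number of covering pairs of Schröder paths of semilength `n`. -/
noncomputable def schroderEdges (n : ℕ) : ℕ :=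
  Nat.card {p : List Step × List Step // Covers (IsSchroder n) p.1 p.2}

/-- The number of edges of the Hasse diagram of the Grand Schröder lattice `GS_n`. -/
noncomputable def grandSchroderEdges (n : ℕ) : ℕ :=
  Nat.card {p : List Step × List Step // Covers (IsGrandSchroder n) p.1 p.2}

/-- The `n`-th large Schröder number: the number of Schröder paths of semilength `n`. -/
noncomputable def schroderNum (n : ℕ) : ℕ :=
  Nat.card {w : List Step // IsSchroder n w}

/-- The `n`-th central Delannoy number: the number of Grand Schröder paths of
semilength `n`. -/
noncomputable def delannoyNum (n : ℕ) : ℕ :=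
  Nat.card {w : List Step // IsGrandSchroder n w}


/-!
Record a path by its heights at the integer abscissae. Such a profile has steps in
`{-1, 0, 1}`, and every non-flat step starts at an abscissa `x` with height `≡ x (mod 2)`:
the parity encodes that unit horizontal steps come in aligned pairs. Replacing `H` by `UD` or
`DU` by `H` raises the profile by one at a single abscissa, hence is a cover, since a path is
determined by its profile. Conversely, if `γ < γ'`, look at the lowest abscissae where `γ`
lies strictly below `γ'` and take the rightmost one, `x`: the parity condition forces `γ` to
have a valley `DU` at `x` or the middle of an `H` at `x` or `x - 1`, and raising there keeps
the path below `γ'`. So the paths covering `γ` correspond to its `H` steps and `DU` factors,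
and, reading these moves backwards, the paths covered by `γ` to its `UD` factors and its `H`
steps at positive height, the only ones that can be lowered.
-/

namespace List

variable {α : Type*}

theorem count_eq_card_filter_getElem? [DecidableEq α] (l : List α) (a : α) :
    l.count a = ((Finset.range l.length).filter (fun i => l[i]? = some a)).card := by
  rw [Finset.card_filter]
  induction l with
  | nil => simp
  | cons c l ih =>
    rw [count_cons, ih, length_cons, Finset.sum_range_succ']
    simp

theorem exists_eq_append_cons_iff {l : List α} {a : α} {P : List α → List α → Prop} :
    (∃ A B, l = A ++ a :: B ∧ P A B) ↔
      ∃ i, l[i]? = some a ∧ P (l.take i) (l.drop (i + 1)) := by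
  constructor
  · rintro ⟨A, B, rfl, h⟩
    exact ⟨A.length, by simp, by simpa using h⟩
  · rintro ⟨i, hi, h⟩
    refine ⟨_, _, ?_, h⟩
    obtain ⟨hlt, rfl⟩ := getElem?_eq_some_iff.1 hi
    rw [getElem_cons_drop, take_append_drop]

theorem exists_eq_append_cons_cons_iff {l : List α} {a b : α} {P : List α → List α → Prop} :
    (∃ A B, l = A ++ a :: b :: B ∧ P A B) ↔
      ∃ i, l[i]? = some a ∧ l[i + 1]? = some b ∧ P (l.take i) (l.drop (i + 2)) := by
  constructor
  · rintro ⟨A, B, rfl, h⟩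
    exact ⟨A.length, by simp, by simp, by simpa using h⟩
  · rintro ⟨i, hi, hi', h⟩
    refine ⟨_, _, ?_, h⟩
    obtain ⟨hlt, rfl⟩ := getElem?_eq_some_iff.1 hi
    obtain ⟨hlt', rfl⟩ := getElem?_eq_some_iff.1 hi'
    rw [getElem_cons_drop, getElem_cons_drop, take_append_drop]

theorem eq_of_take_append_cons_eq {l u v : List α} {i j : ℕ} {a b : α} (hi : i < l.length)
    (hj : j < l.length) (ha : l[i]? ≠ some a) (hb : l[j]? ≠ some b)
    (h : l.take i ++ a :: u = l.take j ++ b :: v) : i = j := by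
  have key : ∀ {i j a b u v}, i < j → j < l.length → l[i]? ≠ some a →
      l.take i ++ a :: u = l.take j ++ b :: v → False := by
    intro i j a b u v hij hj ha h
    have := congrArg (·[i]?) h
    simp only [getElem?_append_left (show i < (l.take j).length by simp; omega)] at this
    simp [show i ≤ l.length by omega, hij] at this
    exact ha this.symm
  rcases lt_trichotomy i j with hij | rfl | hij
  · exact (key hij hj ha h).elim
  · rfl
  · exact (key hij hi hb h.symm).elim

end List

theorem Nat.card_eq_card_add_card_of_injOn {α : Type*} {P : α → Prop} {s t : Finset ℕ}
    {f g : ℕ → α} (hf : Set.InjOn f s) (hg : Set.InjOn g t)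
    (hfg : ∀ i ∈ s, ∀ j ∈ t, f i ≠ g j)
    (hP : ∀ a, P a ↔ (∃ i ∈ s, f i = a) ∨ ∃ j ∈ t, g j = a) :
    Nat.card {a // P a} = s.card + t.card := by
  classical
  have hdisj : Disjoint (s.image f) (t.image g) := by
    simp only [Finset.disjoint_left, Finset.mem_image, not_exists, not_and]
    rintro _ ⟨i, hi, rfl⟩ j hj h
    exact hfg i hi j hj h.symm
  rw [Nat.card_congr (Equiv.subtypeEquivRight (p := P) (q := (· ∈ s.image f ∪ t.image g))
      (by simp [hP])), Nat.card_eq_fintype_card, Fintype.card_coe,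
    Finset.card_union_of_disjoint hdisj, Finset.card_image_of_injOn hf,
    Finset.card_image_of_injOn hg]

theorem exists_lowest_rightmost (f : ℕ → ℤ) {S : Finset ℕ} (hS : S.Nonempty) :
    ∃ x ∈ S, ∀ y ∈ S, f x < f y ∨ f x = f y ∧ y ≤ x := by
  obtain ⟨x, hx, hmin⟩ := S.exists_min_image (fun y => toLex (f y, -(y : ℤ))) hS
  exact ⟨x, hx, fun y hy => by
    simpa only [Prod.Lex.toLex_le_toLex, neg_le_neg_iff, Nat.cast_le] using hmin y hy⟩

def IsPathProfile (f : ℕ → ℤ) : Prop :=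
  ∀ x, |f (x + 1) - f x| ≤ 1 ∧ (f (x + 1) ≠ f x → Even (f x + x))

theorem IsPathProfile.exists_raise_point {f g : ℕ → ℤ} {N : ℕ} (hf : IsPathProfile f)
    (hg : IsPathProfile g) (hle : f ≤ g) (h0 : f 0 = g 0) (hN : f N = g N) {x₀ : ℕ}
    (hx₀ : f x₀ < g x₀) (hx₀N : x₀ < N) :
    (∃ x < N, f x < g x ∧ Odd (f x + x)) ∨
      ∃ x, f (x + 1) < g (x + 1) ∧ f x = f (x + 1) + 1 ∧ f (x + 2) = f (x + 1) + 1 := by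
  classical
  set S := (Finset.range N).filter fun x => f x < g x
  have mem_S : ∀ {y}, y ∈ S ↔ y < N ∧ f y < g y := by simp [S]
  obtain ⟨x, hxS, hxmin⟩ := exists_lowest_rightmost f ⟨x₀, mem_S.2 ⟨hx₀N, hx₀⟩⟩
  obtain ⟨hxN, hx⟩ := mem_S.1 hxS
  obtain ⟨t, rfl⟩ : ∃ t, x = t + 1 := Nat.exists_eq_add_one.2 <|
    Nat.pos_of_ne_zero fun h => by subst h; omega
  have := hle t; have := hle (t + 1); have := hle (t + 2)
  obtain ⟨hf₀, hfe₀⟩ := hf t; obtain ⟨hf₁, hfe₁⟩ := hf (t + 1)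
  obtain ⟨hg₀, hge₀⟩ := hg t; obtain ⟨hg₁, hge₁⟩ := hg (t + 1)
  rw [abs_le] at hf₀ hf₁ hg₀ hg₁
  simp only [Int.even_iff, Int.odd_iff, Nat.cast_add, Nat.cast_one, Nat.reduceAdd,
    add_assoc] at *
  have hup : f (t + 2) = f (t + 1) + 1 ∨ (f (t + 1) + (t + 1)) % 2 = 1 := by
    by_cases h2 : t + 2 < N ∧ f (t + 2) < g (t + 2)
    · have := hxmin _ (mem_S.2 h2)
      omega
    · have : g (t + 2) = f (t + 2) := by
        rcases not_and_or.1 h2 with h | h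
        · obtain rfl : N = t + 2 := by omega
          exact hN.symm
        · omega
      omega
  rcases hup with hup | hodd
  swap
  · exact Or.inl ⟨t + 1, hxN, hx, by push_cast; omega⟩
  have heven := hfe₁ (by omega)
  have hft : f (t + 1) ≤ f t := by
    by_cases ht : f t < g t
    · have := hxmin t (mem_S.2 ⟨by omega, ht⟩)
      omega
    · omega
  by_cases hvalley : f t = f (t + 1) + 1
  · exact Or.inr ⟨t, hx, hvalley, hup⟩
  by_cases ht : f t < g t
  · exact Or.inl ⟨t, by omega, ht, by omega⟩
  · have := hge₀ (by omega)
    omega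

open Step

theorem expand_cons (c : Step) (w : List Step) : expand (c :: w) = expand [c] ++ expand w := by
  simp [expand]

theorem expand_append (A B : List Step) : expand (A ++ B) = expand A ++ expand B :=
  List.flatMap_append

theorem height_append (A B : List Step) : height (A ++ B) = height A + height B := by
  simp only [height, List.count_append]; push_cast; ring

theorem length_expand (w : List Step) :
    (expand w).length = w.count U + w.count D + 2 * w.count H := by
  induction w with
  | nil => rfl
  | cons c w ih => rw [expand_cons, List.length_append, ih]; cases c <;> simp [expand] <;> omega

theorem height_expand (w : List Step) : height (expand w) = height w := by
  induction w with
  | nil => rfl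
  | cons c w ih =>
    rw [expand_cons, height_append, ih, ← List.singleton_append (l := w), height_append]
    cases c <;> rfl

theorem even_height_add_length_expand (A : List Step) : Even (height A + (expand A).length) := by
  rw [length_expand, height]
  exact ⟨A.count U + A.count H, by push_cast; ring⟩

def unexpand : List Step → List Step
  | H :: H :: l => H :: unexpand l
  | c :: l => c :: unexpand l
  | [] => []

theorem unexpand_expand (w : List Step) : unexpand (expand w) = w := by
  induction w with
  | nil => rfl
  | cons c w ih => cases c <;> simp [expand, unexpand] at ih ⊢ <;> exact ih

theorem expand_injective : Function.Injective expand :=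
  Function.LeftInverse.injective unexpand_expand

@[simp] theorem heightAt_zero (w : List Step) : heightAt w 0 = 0 := rfl

theorem heightAt_append (A B : List Step) (x : ℕ) :
    heightAt (A ++ B) x = heightAt A x + heightAt B (x - (expand A).length) := by
  simp only [heightAt, expand_append, List.take_append, height_append]

theorem heightAt_of_length_le {w : List Step} {x : ℕ} (hx : (expand w).length ≤ x) :
    heightAt w x = height w := by
  rw [heightAt, List.take_of_length_le hx, height_expand]

theorem heightAt_append_length_add (A B : List Step) (y : ℕ) :
    heightAt (A ++ B) ((expand A).length + y) = height A + heightAt B y := by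
  rw [heightAt_append, heightAt_of_length_le (by omega), Nat.add_sub_cancel_left]

theorem heightAt_append_length (A B : List Step) :
    heightAt (A ++ B) (expand A).length = height A := by
  simpa using heightAt_append_length_add A B 0

theorem heightAt_append_H_cons {A B : List Step} {y : ℕ} (hy : y ≤ 2) :
    heightAt (A ++ H :: B) ((expand A).length + y) = height A := by
  rw [heightAt_append_length_add]
  interval_cases y <;> simp [heightAt, expand, height]

theorem heightAt_succ (w : List Step) (x : ℕ) :
    heightAt w (x + 1) = heightAt w x + height (expand w)[x]?.toList := by
  rw [heightAt, heightAt, List.take_add_one, height_append]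

theorem eq_of_heightAt_eq {w z : List Step} (hl : (expand w).length = (expand z).length)
    (h : heightAt w = heightAt z) : w = z := by
  refine expand_injective (List.ext_getElem? fun x => ?_)
  rcases lt_or_ge x (expand w).length with hx | hx
  · have hs := heightAt_succ w x
    rw [h, heightAt_succ z x, add_right_inj, List.getElem?_eq_getElem hx,
      List.getElem?_eq_getElem (hl ▸ hx)] at hs
    rw [List.getElem?_eq_getElem hx, List.getElem?_eq_getElem (hl ▸ hx)]
    revert hs
    cases (expand z)[x] <;> cases (expand w)[x] <;> simp [height]
  · rw [List.getElem?_eq_none hx, List.getElem?_eq_none (hl ▸ hx)]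

theorem exists_eq_append_of_le_length_expand (w : List Step) {x : ℕ}
    (hx : x ≤ (expand w).length) :
    (∃ A B, w = A ++ B ∧ x = (expand A).length) ∨
      ∃ A B, w = A ++ H :: B ∧ x = (expand A).length + 1 := by
  induction w generalizing x with
  | nil => exact Or.inl ⟨[], [], rfl, by simpa [expand] using hx⟩
  | cons c w ih =>
    rcases x with _ | x
    · exact Or.inl ⟨[], c :: w, rfl, rfl⟩
    have shift : ∀ {y}, y ≤ (expand w).length → x + 1 = (expand [c]).length + y →
        (∃ A B, c :: w = A ++ B ∧ x + 1 = (expand A).length) ∨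
          ∃ A B, c :: w = A ++ H :: B ∧ x + 1 = (expand A).length + 1 := by
      intro y hy hxy
      rcases ih hy with ⟨A, B, rfl, rfl⟩ | ⟨A, B, rfl, rfl⟩
      · exact Or.inl ⟨c :: A, B, rfl, by rw [hxy, expand_cons c A, List.length_append]⟩
      · refine Or.inr ⟨c :: A, B, rfl, ?_⟩
        rw [hxy, expand_cons c A, List.length_append, add_assoc]
    rw [expand_cons c w, List.length_append] at hx
    cases c
    case H =>
      rcases x with _ | x
      · exact Or.inr ⟨[], w, rfl, rfl⟩
      · exact shift (y := x) (by change _ ≤ 2 + _ at hx; omega) (by change _ = 2 + x; omega)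
    all_goals exact shift (y := x) (by change _ ≤ 1 + _ at hx; omega) (by change _ = 1 + x; omega)

theorem isPathProfile_heightAt (w : List Step) : IsPathProfile (heightAt w) := by
  intro x
  refine ⟨?_, fun hne => ?_⟩
  · rw [heightAt_succ, add_sub_cancel_left]
    rcases (expand w)[x]? with _ | c
    · simp [height]
    · cases c <;> simp [height]
  rcases le_or_gt (expand w).length x with hx | hx
  · exact absurd (by rw [heightAt_of_length_le hx, heightAt_of_length_le (by omega)]) hne
  rcases exists_eq_append_of_le_length_expand w hx.le with
    ⟨A, B, rfl, rfl⟩ | ⟨A, B, rfl, rfl⟩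
  · rw [heightAt_append_length]
    exact even_height_add_length_expand A
  · exact absurd (by rw [heightAt_append_H_cons le_rfl, heightAt_append_H_cons one_le_two]) hne

theorem exists_eq_append_H_cons_of_odd {w : List Step} {x : ℕ} (hx : x ≤ (expand w).length)
    (hodd : Odd (heightAt w x + x)) : ∃ A B, w = A ++ H :: B ∧ x = (expand A).length + 1 := by
  refine (exists_eq_append_of_le_length_expand w hx).resolve_left ?_
  rintro ⟨A, B, rfl, rfl⟩
  rw [heightAt_append_length, ← Int.not_even_iff_odd] at hodd
  exact hodd (even_height_add_length_expand A)

theorem exists_eq_cons_of_heightAt_one {B : List Step} {c : Step} (hc : c ≠ H)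
    (h : heightAt B 1 = height [c]) : ∃ B', B = c :: B' := by
  rcases B with _ | ⟨d, B⟩
  · cases c <;> simp_all [heightAt, expand, height]
  · refine ⟨B, ?_⟩
    cases c <;> cases d <;> simp_all [heightAt, expand, height]

theorem exists_eq_append_D_U_of_valley {w : List Step} {x : ℕ}
    (hD : heightAt w x = heightAt w (x + 1) + 1)
    (hU : heightAt w (x + 2) = heightAt w (x + 1) + 1) :
    ∃ A B, w = A ++ D :: U :: B ∧ x = (expand A).length := by
  have heven := (isPathProfile_heightAt w x).2 (by omega)
  have hx : x ≤ (expand w).length := by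
    by_contra! hx
    rw [heightAt_of_length_le hx.le, heightAt_of_length_le (by omega)] at hD
    omega
  rcases exists_eq_append_of_le_length_expand w hx with ⟨A, B, rfl, rfl⟩ | ⟨A, B, rfl, rfl⟩
  · simp only [heightAt_append_length_add, heightAt_append_length] at hD hU
    obtain ⟨B, rfl⟩ := exists_eq_cons_of_heightAt_one (c := D) (B := B) (by simp)
      (by rw [show height [D] = -1 from rfl]; omega)
    have h2 : heightAt (D :: B) 2 = -1 + heightAt B 1 := heightAt_append_length_add [D] B 1
    obtain ⟨B, rfl⟩ := exists_eq_cons_of_heightAt_one (c := U) (B := B) (by simp)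
      (by rw [show height [U] = 1 from rfl]; omega)
    exact ⟨A, B, rfl, rfl⟩
  · rw [heightAt_append_H_cons (by norm_num), Nat.cast_add_one, ← add_assoc,
      Int.even_add_one] at heven
    exact absurd (even_height_add_length_expand A) heven

def Raises (w w' : List Step) : Prop :=
  (∃ A B, w = A ++ H :: B ∧ w' = A ++ U :: D :: B) ∨
    ∃ A B, w = A ++ D :: U :: B ∧ w' = A ++ H :: B

theorem heightAt_append_append_eq_add_single (A M M' B : List Step)
    (hM : (expand M).length = (expand M').length)
    (hM' : heightAt M' = heightAt M + Pi.single 1 1) :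
    heightAt (A ++ (M' ++ B)) = heightAt (A ++ (M ++ B)) + Pi.single ((expand A).length + 1) 1 := by
  ext x
  simp only [Pi.add_apply, heightAt_append, hM, hM', Pi.single_apply]
  split_ifs <;> omega

theorem heightAt_raise_H (A B : List Step) :
    heightAt (A ++ U :: D :: B) = heightAt (A ++ H :: B) + Pi.single ((expand A).length + 1) 1 :=
  heightAt_append_append_eq_add_single A [H] [U, D] B rfl <| by
    ext (_ | _ | y) <;> simp [heightAt, expand, height]

theorem heightAt_raise_D_U (A B : List Step) :
    heightAt (A ++ H :: B) = heightAt (A ++ D :: U :: B) + Pi.single ((expand A).length + 1) 1 :=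
  heightAt_append_append_eq_add_single A [D, U] [H] B rfl <| by
    ext (_ | _ | y) <;> simp [heightAt, expand, height]

theorem Raises.exists_heightAt_eq {w w' : List Step} (h : Raises w w') :
    ∃ x, heightAt w' = heightAt w + Pi.single x 1 := by
  rcases h with ⟨A, B, rfl, rfl⟩ | ⟨A, B, rfl, rfl⟩
  · exact ⟨_, heightAt_raise_H A B⟩
  · exact ⟨_, heightAt_raise_D_U A B⟩

theorem Raises.isGrandSchroder_iff {n : ℕ} {w w' : List Step} (h : Raises w w') :
    IsGrandSchroder n w ↔ IsGrandSchroder n w' := by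
  rcases h with ⟨A, B, rfl, rfl⟩ | ⟨A, B, rfl, rfl⟩ <;>
    simp [IsGrandSchroder, List.count_append] <;> omega

theorem IsGrandSchroder.length_expand {n : ℕ} {w : List Step} (hw : IsGrandSchroder n w) :
    (expand w).length = 2 * n := by
  rw [_root_.length_expand]; have := hw.1; have := hw.2; omega

theorem IsGrandSchroder.heightAt_of_le {n : ℕ} {w : List Step} (hw : IsGrandSchroder n w)
    {x : ℕ} (hx : 2 * n ≤ x) : heightAt w x = 0 := by
  rw [heightAt_of_length_le (hw.length_expand ▸ hx), height, hw.1, sub_self]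

theorem forall_height_take_nonneg_iff (w : List Step) :
    (∀ i, 0 ≤ height (w.take i)) ↔ ∀ x, 0 ≤ heightAt w x := by
  refine ⟨fun h x => ?_, fun h i => ?_⟩
  · rcases le_or_gt (expand w).length x with hx | hx
    · simpa [heightAt_of_length_le hx] using h w.length
    rcases exists_eq_append_of_le_length_expand w hx.le with
      ⟨A, B, rfl, rfl⟩ | ⟨A, B, rfl, rfl⟩
    · simpa [heightAt_append_length] using h A.length
    · simpa [heightAt_append_H_cons] using h A.length
  · have := heightAt_append_length (w.take i) (w.drop i)
    rw [List.take_append_drop] at this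
    exact this ▸ h _

theorem isSchroder_iff {n : ℕ} {w : List Step} :
    IsSchroder n w ↔ IsGrandSchroder n w ∧ ∀ x, 0 ≤ heightAt w x := by
  rw [IsSchroder, IsGrandSchroder, forall_height_take_nonneg_iff, and_assoc]

theorem IsSchroder.isGrandSchroder {n : ℕ} {w : List Step} (hw : IsSchroder n w) :
    IsGrandSchroder n w :=
  (isSchroder_iff.1 hw).1

theorem Raises.isSchroder {n : ℕ} {w w' : List Step} (h : Raises w w') (hw : IsSchroder n w) :
    IsSchroder n w' := by
  obtain ⟨x, hx⟩ := h.exists_heightAt_eq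
  rw [isSchroder_iff] at hw ⊢
  refine ⟨h.isGrandSchroder_iff.1 hw.1, fun y => ?_⟩
  have := hw.2 y
  rw [hx, Pi.add_apply, Pi.single_apply]
  split_ifs <;> omega

theorem isSchroder_of_heightAt_eq_add_single {n : ℕ} {w w' : List Step} {x : ℕ}
    (hw : IsGrandSchroder n w) (hw' : IsSchroder n w')
    (hx : heightAt w' = heightAt w + Pi.single x 1) (h1 : 1 ≤ heightAt w' x) :
    IsSchroder n w := by
  refine isSchroder_iff.2 ⟨hw, fun y => ?_⟩
  have hy := congrFun hx y
  have := (isSchroder_iff.1 hw').2 y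
  rcases eq_or_ne y x with rfl | hne <;> simp_all

theorem pathLt_of_heightAt_eq_add_single {w w' : List Step} {x : ℕ}
    (hx : heightAt w' = heightAt w + Pi.single x 1) : PathLt w w' := by
  refine ⟨fun y => ?_, fun h => ?_⟩
  · rw [hx, Pi.add_apply, Pi.single_apply]
    split_ifs <;> omega
  · have := h x
    simp [hx] at this

theorem PathLe.add_single {w w' z : List Step} {x : ℕ}
    (hx : heightAt w' = heightAt w + Pi.single x 1) (hle : PathLe w z)
    (hlt : heightAt w x < heightAt z x) : PathLe w' z := by
  intro y
  rw [hx, Pi.add_apply]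
  rcases eq_or_ne y x with rfl | hne
  · simpa using hlt
  · simpa [hne] using hle y

theorem pathLe_or_pathLe_of_heightAt_eq_add_single {w w' z : List Step} {x : ℕ}
    (hx : heightAt w' = heightAt w + Pi.single x 1) (h : PathLe w z) (h' : PathLe z w') :
    PathLe z w ∨ PathLe w' z := by
  have hz := h x
  have hz' := h' x
  simp only [hx, Pi.add_apply, Pi.single_eq_same] at hz'
  rcases hz.lt_or_eq with hlt | heq
  · exact Or.inr (h.add_single hx (by omega))
  · refine Or.inl fun y => ?_
    rcases eq_or_ne y x with rfl | hne
    · exact heq.ge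
    · simpa [hx, hne] using h' y

theorem exists_raises_pathLe {n : ℕ} {w z : List Step} (hw : IsGrandSchroder n w)
    (hz : IsGrandSchroder n z) (hle : PathLe w z) (hlt : ¬ PathLe z w) :
    ∃ r, Raises w r ∧ PathLe r z := by
  obtain ⟨x₀, hx₀⟩ : ∃ x, heightAt w x < heightAt z x := by simpa [PathLe] using hlt
  have hx₀N : x₀ < 2 * n := by
    by_contra! h
    rw [hw.heightAt_of_le h, hz.heightAt_of_le h] at hx₀
    exact hx₀.false
  rcases (isPathProfile_heightAt w).exists_raise_point (isPathProfile_heightAt z) hle (by simp)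
      (by rw [hw.heightAt_of_le le_rfl, hz.heightAt_of_le le_rfl]) hx₀ hx₀N
    with ⟨x, hxN, hx, hodd⟩ | ⟨x, hx, hD, hU⟩
  · obtain ⟨A, B, rfl, rfl⟩ :=
      exists_eq_append_H_cons_of_odd (hw.length_expand ▸ hxN.le) hodd
    exact ⟨_, Or.inl ⟨A, B, rfl, rfl⟩, hle.add_single (heightAt_raise_H A B) hx⟩
  · obtain ⟨A, B, rfl, rfl⟩ := exists_eq_append_D_U_of_valley hD hU
    exact ⟨_, Or.inr ⟨A, B, rfl, rfl⟩, hle.add_single (heightAt_raise_D_U A B) hx⟩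

theorem covers_iff_raises {n : ℕ} {w w' : List Step} (hw : IsSchroder n w) :
    Covers (IsSchroder n) w w' ↔ Raises w w' := by
  refine ⟨fun ⟨_, hw', ⟨hle, hlt⟩, hmin⟩ => ?_, fun h => ?_⟩
  · obtain ⟨r, hr, hrw'⟩ := exists_raises_pathLe hw.isGrandSchroder hw'.isGrandSchroder hle hlt
    by_cases hw'r : PathLe w' r
    · obtain rfl : r = w' := eq_of_heightAt_eq
        (by rw [(hr.isSchroder hw).isGrandSchroder.length_expand,
          hw'.isGrandSchroder.length_expand])
        (funext fun y => (hrw' y).antisymm (hw'r y))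
      exact hr
    · obtain ⟨x, hx⟩ := hr.exists_heightAt_eq
      exact (hmin r (hr.isSchroder hw) ⟨pathLt_of_heightAt_eq_add_single hx, hrw', hw'r⟩).elim
  · obtain ⟨x, hx⟩ := h.exists_heightAt_eq
    refine ⟨hw, h.isSchroder hw, pathLt_of_heightAt_eq_add_single hx, ?_⟩
    rintro z - ⟨⟨hwz, hzw⟩, hzw', hw'z⟩
    exact (pathLe_or_pathLe_of_heightAt_eq_add_single hx hwz hzw').elim hzw hw'z

theorem covers_iff_lowering {n : ℕ} {w γ : List Step} (hγ : IsSchroder n γ) :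
    Covers (IsSchroder n) w γ ↔
      (∃ A B, γ = A ++ H :: B ∧ 1 ≤ height A ∧ w = A ++ D :: U :: B) ∨
        ∃ A B, γ = A ++ U :: D :: B ∧ w = A ++ H :: B := by
  have hcov : Covers (IsSchroder n) w γ ↔ IsSchroder n w ∧ Raises w γ :=
    ⟨fun h => ⟨h.1, (covers_iff_raises h.1).1 h⟩, fun h => (covers_iff_raises h.1).2 h.2⟩
  rw [hcov]
  constructor
  · rintro ⟨hw, ⟨A, B, rfl, rfl⟩ | ⟨A, B, rfl, rfl⟩⟩
    · exact Or.inr ⟨A, B, rfl, rfl⟩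
    · refine Or.inl ⟨A, B, rfl, ?_, rfl⟩
      have := hw.2.2 (A.length + 1)
      rw [List.take_append, List.take_of_length_le (by omega), Nat.add_sub_cancel_left,
        height_append, show height ((D :: U :: B).take 1) = -1 from rfl] at this
      omega
  · rintro (⟨A, B, rfl, hA, rfl⟩ | ⟨A, B, rfl, rfl⟩)
    · have h : Raises (A ++ D :: U :: B) (A ++ H :: B) := Or.inr ⟨A, B, rfl, rfl⟩
      refine ⟨isSchroder_of_heightAt_eq_add_single
        (h.isGrandSchroder_iff.2 hγ.isGrandSchroder) hγ
        (heightAt_raise_D_U A B) ?_, h⟩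
      rwa [heightAt_append_H_cons (by norm_num)]
    · have h : Raises (A ++ H :: B) (A ++ U :: D :: B) := Or.inl ⟨A, B, rfl, rfl⟩
      refine ⟨isSchroder_of_heightAt_eq_add_single
        (h.isGrandSchroder_iff.2 hγ.isGrandSchroder) hγ
        (heightAt_raise_H A B) ?_, h⟩
      have := hγ.2.2 A.length
      rw [List.take_left] at this
      rw [heightAt_append_length_add, show heightAt (U :: D :: B) 1 = 1 from rfl]
      omega

theorem natCard_upperCovers {n : ℕ} {γ : List Step} (hγ : IsSchroder n γ) :
    Nat.card {w // Covers (IsSchroder n) γ w} = γ.count H + countFactor D U γ := by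
  rw [List.count_eq_card_filter_getElem?, countFactor]
  refine Nat.card_eq_card_add_card_of_injOn (f := fun i => γ.take i ++ U :: D :: γ.drop (i + 1))
    (g := fun i => γ.take i ++ H :: γ.drop (i + 2)) ?_ ?_ ?_ fun w => ?_
  · intro i hi j hj h
    simp only [Finset.coe_filter, Finset.mem_range, Set.mem_ofPred_eq] at hi hj
    exact List.eq_of_take_append_cons_eq hi.1 hj.1 (by simp [hi.2]) (by simp [hj.2]) h
  · intro i hi j hj h
    simp only [Finset.coe_filter, Finset.mem_range, Set.mem_ofPred_eq] at hi hj
    exact List.eq_of_take_append_cons_eq hi.1 hj.1 (by simp [hi.2.1]) (by simp [hj.2.1]) h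
  · intro i hi j hj h
    simp only [Finset.mem_filter, Finset.mem_range] at hi hj
    obtain rfl := List.eq_of_take_append_cons_eq hi.1 hj.1 (by simp [hi.2]) (by simp [hj.2.1]) h
    simp at h
  · rw [covers_iff_raises hγ, Raises, List.exists_eq_append_cons_iff,
      List.exists_eq_append_cons_cons_iff]
    simp only [Finset.mem_filter, Finset.mem_range, List.getElem?_eq_some_iff]
    grind

theorem natCard_lowerCovers {n : ℕ} {γ : List Step} (hγ : IsSchroder n γ) :
    Nat.card {w // Covers (IsSchroder n) w γ} = countHighH γ + countFactor U D γ := by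
  rw [countHighH, countFactor]
  refine Nat.card_eq_card_add_card_of_injOn (f := fun i => γ.take i ++ D :: U :: γ.drop (i + 1))
    (g := fun i => γ.take i ++ H :: γ.drop (i + 2)) ?_ ?_ ?_ fun w => ?_
  · intro i hi j hj h
    simp only [Finset.coe_filter, Finset.mem_range, Set.mem_ofPred_eq] at hi hj
    exact List.eq_of_take_append_cons_eq hi.1 hj.1 (by simp [hi.2.1]) (by simp [hj.2.1]) h
  · intro i hi j hj h
    simp only [Finset.coe_filter, Finset.mem_range, Set.mem_ofPred_eq] at hi hj
    exact List.eq_of_take_append_cons_eq hi.1 hj.1 (by simp [hi.2.1]) (by simp [hj.2.1]) h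
  · intro i hi j hj h
    simp only [Finset.mem_filter, Finset.mem_range] at hi hj
    obtain rfl := List.eq_of_take_append_cons_eq hi.1 hj.1 (by simp [hi.2.1]) (by simp [hj.2.1]) h
    simp at h
  · rw [covers_iff_lowering hγ, List.exists_eq_append_cons_iff,
      List.exists_eq_append_cons_cons_iff]
    simp only [Finset.mem_filter, Finset.mem_range, List.getElem?_eq_some_iff]
    grind

/-- In the Schröder lattice `S_n`, the number of paths covering a Schröder path `γ`
equals `ω_H(γ) + ω_DU(γ)`, and the number of paths covered by `γ` equals
`ω*_H(γ) + ω_UD(γ)`, where `ω_H` counts horizontal steps, `ω*_H` counts horizontal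
steps at height at least `1`, and `ω_DU`, `ω_UD` count occurrences of a `D` step
immediately followed by a `U` step, resp. a `U` step immediately followed by a `D`
step. -/
theorem schroder_delta_nabla (n : ℕ) (γ : List Step) (hγ : IsSchroder n γ) :
    Nat.card {w : List Step // Covers (IsSchroder n) γ w} =
      γ.count Step.H + countFactor Step.D Step.U γ ∧
    Nat.card {w : List Step // Covers (IsSchroder n) w γ} =
      countHighH γ + countFactor Step.U Step.D γ :=
  ⟨natCard_upperCovers hγ, natCard_lowerCovers hγ⟩
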